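/- For integers $n \ge 2$ and reals $R \ge 1$, $\lambda \ge 1$, one has $\int_{\mathbb{R}^n \setminus 2\lambda R Q} |\eta|^{-(n+1)/2} \prod_{i=1}^n \langle \eta_i \rangle^{-2} \, d\eta \lesssim R^{-(n+3)/2} \lambda^{-(n+3)/2}$, where $Q$ is the unit cube $\{\max_i |\xi_i| \le 1\}$ in $\mathbb{R}^n$. -/

import Mathlib

/-!
On the region where some `|η i|` exceeds `a`, also `‖η‖ ≥ a`, so the weight `‖η‖ ^ (-s)` is at
most `a ^ (-s)`. A union bound over the coordinate `i` that exceeds `a`, together with Fubini,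
leaves `card ι` copies of `(∫_{|t| > a} (1 + t²)⁻¹) · π ^ (card ι - 1)`, and the tail integral is
`2 arctan a⁻¹ ≤ 2 / a`.
-/

open MeasureTheory Real Set

theorem Real.arctan_le_self {x : ℝ} (hx : 0 ≤ x) : arctan x ≤ x := by
  simpa only [tan_arctan] using le_tan (arctan_nonneg.2 hx) (arctan_lt_pi_div_two x)

theorem integral_inv_one_add_sq_abs_gt {a : ℝ} (ha : 0 < a) :
    ∫ t in {t : ℝ | a < |t|}, (1 + t ^ 2)⁻¹ = 2 * arctan a⁻¹ := by
  have hsplit : {t : ℝ | a < |t|} = Iio (-a) ∪ Ioi a := by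
    ext t; simp [lt_abs, lt_neg, or_comm]
  have hdisj : Disjoint (Iio (-a)) (Ioi a) :=
    (Iic_disjoint_Ioi (by linarith)).mono_left Iio_subset_Iic_self
  rw [hsplit, setIntegral_union hdisj measurableSet_Ioi integrable_inv_one_add_sq.integrableOn
    integrable_inv_one_add_sq.integrableOn, ← integral_Iic_eq_integral_Iio,
    integral_Iic_inv_one_add_sq, integral_Ioi_inv_one_add_sq, arctan_neg, arctan_inv_of_pos ha]
  ring

theorem integral_inv_one_add_sq_abs_gt_le {a : ℝ} (ha : 0 < a) :
    ∫ t in {t : ℝ | a < |t|}, (1 + t ^ 2)⁻¹ ≤ 2 * a⁻¹ := by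
  rw [integral_inv_one_add_sq_abs_gt ha]
  gcongr
  exact arctan_le_self (inv_nonneg.2 ha.le)

theorem setIntegral_iUnion_le_sum {α ι : Type*} [MeasurableSpace α] [Fintype ι] {μ : Measure α}
    {s : ι → Set α} {f : α → ℝ} (hf₀ : 0 ≤ f) (hf : Integrable f μ) :
    ∫ x in ⋃ i, s i, f x ∂μ ≤ ∑ i, ∫ x in s i, f x ∂μ := by
  rw [← integral_finsetSum_measure fun i _ => hf.restrict]
  refine integral_mono_measure ?_ (Filter.Eventually.of_forall hf₀)
    (integrable_finsetSum_measure.2 fun i _ => hf.restrict)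
  simpa only [Measure.sum_fintype] using Measure.restrict_iUnion_le (μ := μ) (s := s)

variable {ι : Type*} [Fintype ι]

theorem integrable_euclideanSpace_prod {g : ℝ → ℝ} (hg : Integrable g) :
    Integrable fun η : EuclideanSpace ℝ ι => ∏ i, g (η i) := by
  rw [← (PiLp.volume_preserving_toLp ι).integrable_comp_emb
    (MeasurableEquiv.toLp 2 (ι → ℝ)).measurableEmbedding]
  exact Integrable.fintype_prod fun _ => hg

theorem setIntegral_euclideanSpace_prod_of_mem [DecidableEq ι] (g : ℝ → ℝ) {A : Set ℝ}
    (hA : MeasurableSet A) (i : ι) :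
    ∫ η in {η : EuclideanSpace ℝ ι | η i ∈ A}, ∏ j, g (η j)
      = (∫ t in A, g t) * (∫ t, g t) ^ (Fintype.card ι - 1) := by
  have hmeas : MeasurableSet {η : EuclideanSpace ℝ ι | η i ∈ A} :=
    hA.preimage (EuclideanSpace.proj i).continuous.measurable
  have hind : ∀ x : ι → ℝ, {η : EuclideanSpace ℝ ι | η i ∈ A}.indicator
      (fun η => ∏ j, g (η j)) (WithLp.toLp 2 x)
      = ∏ j, Function.update (fun _ => g) i (A.indicator g) j (x j) := by
    intro x
    simp only [Function.apply_update (fun j (h : ℝ → ℝ) => h (x j)),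
      Finset.prod_update_of_mem (Finset.mem_univ i), Finset.sdiff_singleton_eq_erase,
      ← Finset.mul_prod_erase _ _ (Finset.mem_univ i)]
    by_cases hx : x i ∈ A <;> simp [hx]
  rw [← integral_indicator hmeas, ← (PiLp.volume_preserving_toLp ι).integral_comp
    (MeasurableEquiv.toLp 2 (ι → ℝ)).measurableEmbedding]
  simp only [hind]
  rw [integral_fintype_prod_volume_eq_prod]
  simp only [Function.apply_update (fun _ (h : ℝ → ℝ) => ∫ t, h t),
    Finset.prod_update_of_mem (Finset.mem_univ i), Finset.prod_const, integral_indicator hA,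
    Finset.sdiff_singleton_eq_erase, Finset.card_erase_of_mem (Finset.mem_univ i), Finset.card_univ]

theorem setIntegral_norm_rpow_mul_prod_inv_one_add_sq_le {s a : ℝ} (hs : 0 ≤ s) (ha : 0 < a) :
    ∫ η in {η : EuclideanSpace ℝ ι | ∃ i, a < |η i|}, ‖η‖ ^ (-s) * ∏ i, (1 + η i ^ 2)⁻¹
      ≤ 2 * Fintype.card ι * π ^ (Fintype.card ι - 1) * a ^ (-s - 1) := by
  classical
  set P : EuclideanSpace ℝ ι → ℝ := fun η => ∏ i, (1 + η i ^ 2)⁻¹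
  set T : Set ℝ := {t | a < |t|}
  have hP₀ : 0 ≤ P := fun η => Finset.prod_nonneg fun i _ => by positivity
  have hP : Integrable P := integrable_euclideanSpace_prod integrable_inv_one_add_sq
  have hT : MeasurableSet T := measurableSet_lt measurable_const measurable_abs
  have hS : {η : EuclideanSpace ℝ ι | ∃ i, a < |η i|} = ⋃ i, {η | η i ∈ T} := ofPred_exists _
  have hSmeas : MeasurableSet {η : EuclideanSpace ℝ ι | ∃ i, a < |η i|} := by
    rw [hS]
    exact .iUnion fun i => hT.preimage (EuclideanSpace.proj i).continuous.measurable
  have hweight : ∀ η ∈ {η : EuclideanSpace ℝ ι | ∃ i, a < |η i|}, ‖η‖ ^ (-s) ≤ a ^ (-s) := by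
    rintro η ⟨i, hi⟩
    refine rpow_le_rpow_of_nonpos ha (hi.le.trans ?_) (neg_nonpos.2 hs)
    simpa using PiLp.norm_apply_le η i
  calc _ ≤ ∫ η in {η : EuclideanSpace ℝ ι | ∃ i, a < |η i|}, a ^ (-s) * P η := by
        refine integral_mono_of_nonneg (.of_forall fun η => by positivity) (hP.const_mul _).restrict
          ((ae_restrict_iff' hSmeas).2 (.of_forall fun η hη => ?_))
        exact mul_le_mul_of_nonneg_right (hweight η hη) (hP₀ η)
    _ = a ^ (-s) * ∫ η in ⋃ i, {η : EuclideanSpace ℝ ι | η i ∈ T}, P η := by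
        rw [integral_const_mul, hS]
    _ ≤ a ^ (-s) * ∑ i, ∫ η in {η : EuclideanSpace ℝ ι | η i ∈ T}, P η := by
        gcongr
        exact setIntegral_iUnion_le_sum hP₀ hP
    _ = a ^ (-s) * (Fintype.card ι * ((∫ t in T, (1 + t ^ 2)⁻¹) * π ^ (Fintype.card ι - 1))) := by
        rw [Finset.sum_congr rfl fun i _ =>
          setIntegral_euclideanSpace_prod_of_mem (fun t => (1 + t ^ 2)⁻¹) hT i]
        simp only [integral_univ_inv_one_add_sq, Finset.sum_const, Finset.card_univ, nsmul_eq_mul]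
    _ ≤ a ^ (-s) * (Fintype.card ι * (2 * a⁻¹ * π ^ (Fintype.card ι - 1))) := by
        gcongr
        exact integral_inv_one_add_sq_abs_gt_le ha
    _ = _ := by
        rw [rpow_sub_one ha.ne']
        ring

/-- the integral over the complement of the cube `2λR Q` of
`|η|^{-(n+1)/2} ∏ ⟨η_i⟩⁻²` is `O(R^{-(n+3)/2} λ^{-(n+3)/2})`. -/
theorem stmt_4 (n : ℕ) (hn : 2 ≤ n) :
    ∃ C > 0, ∀ R lam : ℝ, 1 ≤ R → 1 ≤ lam →
      (∫ η in {η : EuclideanSpace ℝ (Fin n) | ∃ i, 2 * lam * R < |η i|},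
        ‖η‖ ^ (-(((n : ℝ) + 1) / 2)) * ∏ i : Fin n, (1 + (η i) ^ 2)⁻¹)
      ≤ C * R ^ (-(((n : ℝ) + 3) / 2)) * lam ^ (-(((n : ℝ) + 3) / 2)) := by
  have hn₀ : 0 < n := by omega
  refine ⟨2 * n * π ^ (n - 1), by positivity, fun R lam hR hlam => ?_⟩
  have hexp : -(((n : ℝ) + 1) / 2) - 1 = -(((n : ℝ) + 3) / 2) := by ring
  calc _ ≤ 2 * n * π ^ (n - 1) * (2 * lam * R) ^ (-(((n : ℝ) + 3) / 2)) := by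
        simpa [hexp] using setIntegral_norm_rpow_mul_prod_inv_one_add_sq_le (ι := Fin n)
          (s := ((n : ℝ) + 1) / 2) (by positivity) (by positivity)
    _ ≤ 2 * n * π ^ (n - 1) * (R * lam) ^ (-(((n : ℝ) + 3) / 2)) := by
        refine mul_le_mul_of_nonneg_left (rpow_le_rpow_of_nonpos (by positivity) ?_ ?_) (by positivity)
        · nlinarith
        · exact neg_nonpos.2 (by positivity)
    _ = _ := by
        rw [mul_rpow (by positivity) (by positivity)]
        ring
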